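/- For every ε > 0 there exists N such that for all n ≥ N, every (full-rank) lattice L ⊂ ℝ^n, every β ≥ 0 with N_α(L) ≤ 2^{βn}·α^n for all α ≥ 1, and every s > 0, one has ρ_s(L) < 1 + (2^{2β + ε}·s²·n/(2πe·λ1(L)²))^{n/2}. -/

import Mathlib

open scoped BigOperators RealInnerProductSpace

noncomputable section

/-- Euclidean space ℝⁿ. -/
abbrev Euc (n : ℕ) := EuclideanSpace ℝ (Fin n)

/-- `IsLattice L` : `L ⊂ ℝⁿ` is a (full-rank) lattice, i.e. the set of integer linear
combinations of some ℝ-basis of ℝⁿ. -/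
def IsLattice {n : ℕ} (L : Set (Euc n)) : Prop :=
  ∃ b : Module.Basis (Fin n) ℝ (Euc n),
    L = {x | ∃ z : Fin n → ℤ, x = ∑ i, (z i : ℝ) • b i}

/-- The dual lattice `L* = {w : ⟨w, y⟩ ∈ ℤ for all y ∈ L}`. -/
def dualLattice {n : ℕ} (L : Set (Euc n)) : Set (Euc n) :=
  {w | ∀ y ∈ L, ∃ k : ℤ, ⟪w, y⟫ = (k : ℝ)}

/-- `λ₁(L)` : the length of a shortest nonzero lattice vector. -/
def lambda1 {n : ℕ} (L : Set (Euc n)) : ℝ :=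
  sInf {r : ℝ | ∃ y ∈ L, y ≠ 0 ∧ ‖y‖ = r}

/-- `μ(L)` : the covering radius `sup_t inf_{y ∈ L} ‖y - t‖`. -/
def covRadius {n : ℕ} (L : Set (Euc n)) : ℝ :=
  ⨆ t : Euc n, ⨅ y : L, ‖(y : Euc n) - t‖

/-- `ρ_s(L - t)` : the Gaussian mass `∑_{y ∈ L} exp(-π‖y - t‖²/s²)`. -/
def gaussMass {n : ℕ} (s : ℝ) (L : Set (Euc n)) (t : Euc n) : ℝ :=
  ∑' y : L, Real.exp (-(Real.pi * ‖(y : Euc n) - t‖ ^ 2 / s ^ 2))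

/-- `ρ_{s,r}(L - t)` : the truncated Gaussian mass
`∑_{y ∈ L, ‖y - t‖ ≥ r} exp(-π‖y - t‖²/s²)`. -/
def truncGaussMass {n : ℕ} (s r : ℝ) (L : Set (Euc n)) (t : Euc n) : ℝ :=
  ∑' y : {v : Euc n // v ∈ L ∧ r ≤ ‖v - t‖},
    Real.exp (-(Real.pi * ‖(y : Euc n) - t‖ ^ 2 / s ^ 2))

/-- `N_α(L)` : the number of nonzero lattice points in the closed ball of radius `α·λ₁(L)`. -/
def latticePointCount {n : ℕ} (α : ℝ) (L : Set (Euc n)) : ℕ :=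
  Set.ncard {y ∈ L | y ≠ 0 ∧ ‖y‖ ≤ α * lambda1 L}


open Finset Real in
private lemma geom_aux {x : ℝ} (h0 : 0 ≤ x) (h1 : x < 1) (k : ℕ) :
    ∑ j ∈ range k, x ^ j ≤ 1 / (1 - x) := by
  have h := geom_sum_Ico_le_of_lt_one h0 h1 (m := 0) (n := k)
  rw [Finset.range_eq_Ico]
  simpa using h

private lemma exp_quad {v : ℝ} (hv : 0 ≤ v) : 1 + v + v ^ 2 / 2 ≤ Real.exp v := by
  have h := Real.sum_le_exp_of_nonneg hv 3
  have e : ∑ i ∈ Finset.range 3, v ^ i / (Nat.factorial i : ℝ) = 1 + v + v ^ 2 / 2 := by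
    rw [Finset.sum_range_succ, Finset.sum_range_succ, Finset.sum_range_succ,
      Finset.sum_range_zero]
    norm_num [Nat.factorial]
  linarith [e ▸ h]

open Finset Real in
set_option maxHeartbeats 2000000 in
private lemma lemA (ε : ℝ) (hε : 0 < ε) :
    ∃ N : ℕ, 1 ≤ N ∧ ∀ n : ℕ, N ≤ n → ∀ t : ℝ, 0 < t → ∀ R : ℕ,
      ∑ i ∈ range R, (Real.exp (ε * Real.log 2 / 4)) ^ ((i + 1) * n) *
          Real.exp (-(t * (Real.exp (ε * Real.log 2 / 4)) ^ (2 * i))) ≤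
        1 / 2 * (2 : ℝ) ^ (ε * (n : ℝ) / 2) *
          ((n : ℝ) / (2 * Real.exp 1 * t)) ^ ((n : ℝ) / 2) := by
  set c : ℝ := ε * Real.log 2 / 4 with hc_def
  have hc : 0 < c := by
    have h2 : 0 < Real.log 2 := Real.log_pos (by norm_num)
    positivity
  set M : ℝ := max (10 + 4 / c) 4 with hM_def
  have hM4 : (4 : ℝ) ≤ M := le_max_right _ _
  have hM10 : 10 + 4 / c ≤ M := le_max_left _ _
  have hMpos : 0 < M := by linarith
  refine ⟨⌈Real.log M / c⌉₊ + 1, le_add_self, ?_⟩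
  intro n hn t ht R
  have hn1 : 1 ≤ n := le_trans le_add_self hn
  have hnR : (0 : ℝ) < n := by exact_mod_cast hn1
  have hlarge : M ≤ Real.exp (c * n) := by
    have h1 : Real.log M / c ≤ (n : ℝ) := by
      calc Real.log M / c ≤ (⌈Real.log M / c⌉₊ : ℝ) := Nat.le_ceil _
        _ ≤ (n : ℝ) := by exact_mod_cast le_trans (Nat.le_succ _) hn
    have h2 : Real.log M ≤ c * n := by
      rw [div_le_iff₀ hc] at h1; linarith
    calc M = Real.exp (Real.log M) := (Real.exp_log hMpos).symm
      _ ≤ Real.exp (c * n) := Real.exp_le_exp.2 h2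
  -- notation
  set x : ℝ := Real.log ((n : ℝ) / (2 * t)) / (2 * c) with hx_def
  set T : ℝ := Real.exp ((n : ℝ) * c * x - n / 2) with hT_def
  have hT : 0 < T := Real.exp_pos _
  set ρ : ℝ := Real.exp (-((n : ℝ) * c)) with hρ_def
  set ρ' : ℝ := Real.exp (-((n : ℝ) * c / 2)) with hρ'_def
  have hρ'0 : 0 ≤ ρ' := (Real.exp_pos _).le
  have hρ0 : 0 ≤ ρ := (Real.exp_pos _).le
  have hlarge' : M ≤ Real.exp ((n:ℝ) * c) := by rw [mul_comm]; exact hlarge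
  have hρ'half : ρ' ≤ 1 / 2 := by
    have hsq : Real.exp ((n:ℝ) * c / 2) * Real.exp ((n:ℝ) * c / 2)
        = Real.exp ((n:ℝ) * c) := by
      rw [← Real.exp_add]; ring_nf
    have h2 : (2:ℝ) ≤ Real.exp ((n:ℝ) * c / 2) := by
      nlinarith [Real.exp_pos ((n:ℝ) * c / 2), hsq, hlarge', hM4]
    rw [hρ'_def, Real.exp_neg]
    rw [inv_le_comm₀ (Real.exp_pos _) (by norm_num)]
    linarith
  have hρhalf : ρ ≤ 1 / 2 := by
    have : ρ ≤ ρ' := by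
      rw [hρ_def, hρ'_def]
      apply Real.exp_le_exp.2
      nlinarith [mul_nonneg hnR.le hc.le]
    linarith
  -- key exponent identity
  have hqpow : ∀ m : ℕ, (Real.exp c) ^ m = Real.exp (c * m) := by
    intro m; rw [mul_comm, Real.exp_nat_mul]
  have hexp2cx : Real.exp (2 * c * x) = (n : ℝ) / (2 * t) := by
    have : 2 * c * x = Real.log ((n : ℝ) / (2 * t)) := by
      rw [hx_def, mul_div_assoc']; exact mul_div_cancel_left₀ _ (by positivity)
    rw [this, Real.exp_log (by positivity)]
  have hti : ∀ i : ℕ, t * (Real.exp c) ^ (2 * i) = (n : ℝ) / 2 * Real.exp (2 * c * ((i : ℝ) - x)) := by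
    intro i
    rw [hqpow]
    have h1 : Real.exp (2 * c * ((i : ℝ) - x)) = Real.exp (c * (2 * i)) / Real.exp (2 * c * x) := by
      rw [← Real.exp_sub]; ring_nf
    rw [h1, hexp2cx]
    field_simp
    push_cast; ring_nf
  -- per-term formula
  have hterm : ∀ i : ℕ,
      (Real.exp c) ^ ((i + 1) * n) * Real.exp (-(t * (Real.exp c) ^ (2 * i)))
        = Real.exp (c * n) * (T * Real.exp ((n : ℝ) * (c * ((i : ℝ) - x))
            - (n : ℝ) / 2 * (Real.exp (2 * (c * ((i : ℝ) - x))) - 1))) := by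
    intro i
    rw [hqpow, hti i, hT_def, ← Real.exp_add, ← Real.exp_add, ← Real.exp_add]
    congr 1
    push_cast
    ring
  -- G bounds
  have hG0 : ∀ y : ℝ, Real.exp ((n : ℝ) * y - (n : ℝ) / 2 * (Real.exp (2 * y) - 1)) ≤ 1 := by
    intro y
    have h1 : 2 * y + 1 ≤ Real.exp (2 * y) := Real.add_one_le_exp _
    calc Real.exp ((n : ℝ) * y - (n : ℝ) / 2 * (Real.exp (2 * y) - 1))
        ≤ Real.exp 0 := Real.exp_le_exp.2 (by nlinarith [hnR.le])
      _ = 1 := Real.exp_zero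
  have hGR : ∀ y : ℝ, 0 ≤ y →
      Real.exp ((n : ℝ) * y - (n : ℝ) / 2 * (Real.exp (2 * y) - 1))
        ≤ Real.exp (-((n : ℝ) * y ^ 2)) := by
    intro y hy
    apply Real.exp_le_exp.2
    have h1 : 1 + 2 * y + (2 * y) ^ 2 / 2 ≤ Real.exp (2 * y) := exp_quad (by linarith)
    nlinarith [hnR.le]
  have hGL : ∀ y : ℝ, y ≤ -1 →
      Real.exp ((n : ℝ) * y - (n : ℝ) / 2 * (Real.exp (2 * y) - 1))
        ≤ Real.exp ((n : ℝ) * y / 2) := by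
    intro y hy
    apply Real.exp_le_exp.2
    have e1 : (0:ℝ) ≤ (n : ℝ) / 2 * Real.exp (2 * y) := by positivity
    have e2 : (0:ℝ) ≤ (n : ℝ) * (-(y + 1)) :=
      mul_nonneg hnR.le (by linarith)
    linarith [e1, e2]
  -- anchors
  set p : ℕ := ⌈x + 1 / c⌉₊ with hp_def
  set p' : ℕ := ⌊x - 1 / c⌋₊ with hp'_def
  -- majorants
  set A : ℕ → ℝ := fun i => if p ≤ i then T * ρ ^ (i - p) else 0 with hA_def
  set B : ℕ → ℝ := fun i => if (i : ℝ) ≤ x - 1 / c then T * ρ' ^ (p' - i) else 0 with hB_def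
  set C : ℕ → ℝ := fun i => if x - 1 / c < (i : ℝ) ∧ (i : ℝ) < x + 1 / c then T else 0
    with hC_def
  have hA0 : ∀ i, 0 ≤ A i := by
    intro i; rw [hA_def]; dsimp only; split <;> positivity
  have hB0 : ∀ i, 0 ≤ B i := by
    intro i; rw [hB_def]; dsimp only; split <;> positivity
  have hC0 : ∀ i, 0 ≤ C i := by
    intro i; rw [hC_def]; dsimp only; split <;> positivity
  -- pointwise bound
  have hpoint : ∀ i : ℕ, T * Real.exp ((n : ℝ) * (c * ((i : ℝ) - x))
      - (n : ℝ) / 2 * (Real.exp (2 * (c * ((i : ℝ) - x))) - 1)) ≤ A i + B i + C i := by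
    intro i
    set y : ℝ := c * ((i : ℝ) - x) with hy_def
    rcases le_or_gt ((i : ℝ)) (x - 1 / c) with hL | hR
    · -- left regime
      have hip' : i ≤ p' := Nat.le_floor (by exact_mod_cast hL)
      have hx0 : 0 ≤ x - 1 / c := le_trans (Nat.cast_nonneg i) hL
      have hp'x : (p' : ℝ) ≤ x := le_trans (Nat.floor_le hx0) (by linarith [one_div_pos.2 hc])
      have hui : y ≤ -1 := by
        rw [hy_def]
        have h0 : (i : ℝ) - x ≤ -(1 / c) := by linarith
        calc c * ((i : ℝ) - x) ≤ c * (-(1 / c)) := by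
              apply mul_le_mul_of_nonneg_left h0 hc.le
          _ = -1 := by field_simp
      have h1 := hGL y hui
      have h2 : Real.exp ((n : ℝ) * y / 2) ≤ ρ' ^ (p' - i) := by
        have hcast : ((p' - i : ℕ) : ℝ) = (p' : ℝ) - i := by
          rw [Nat.cast_sub hip']
        rw [hρ'_def, ← Real.exp_nat_mul, Real.exp_le_exp, hcast, hy_def]
        have h3 : (p' : ℝ) - (i : ℝ) ≤ x - i := by linarith
        have h4 : (0:ℝ) ≤ (n : ℝ) * c / 2 := by positivity
        have h5 := mul_le_mul_of_nonneg_right h3 h4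
        nlinarith [h5]
      have hBi : B i = T * ρ' ^ (p' - i) := by rw [hB_def]; exact if_pos hL
      have hfin : T * Real.exp ((n : ℝ) * y - (n : ℝ) / 2 * (Real.exp (2 * y) - 1)) ≤ B i := by
        rw [hBi]
        exact mul_le_mul_of_nonneg_left (le_trans h1 h2) hT.le
      linarith [hA0 i, hC0 i]
    · rcases lt_or_ge ((i : ℝ)) (x + 1 / c) with hmid | hRR
      · have hCi : C i = T := by rw [hC_def]; exact if_pos ⟨hR, hmid⟩
        have : T * Real.exp ((n : ℝ) * y - (n : ℝ) / 2 * (Real.exp (2 * y) - 1)) ≤ C i := by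
          rw [hCi]
          have := mul_le_mul_of_nonneg_left (hG0 y) hT.le
          simpa using this
        linarith [hA0 i, hB0 i]
      · -- right regime
        have hpi : p ≤ i := Nat.ceil_le.2 hRR
        have hpx : x ≤ (p : ℝ) := le_trans (by linarith [one_div_pos.2 hc]) (Nat.le_ceil _)
        have hui1 : 1 ≤ y := by
          rw [hy_def]
          have h1 : 1 / c ≤ (i : ℝ) - x := by linarith
          calc (1 : ℝ) = c * (1 / c) := by field_simp
            _ ≤ c * ((i : ℝ) - x) := mul_le_mul_of_nonneg_left h1 hc.le
        have h1 := hGR y (by linarith)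
        have h2 : Real.exp (-((n : ℝ) * y ^ 2)) ≤ ρ ^ (i - p) := by
          have hcast : ((i - p : ℕ) : ℝ) = (i : ℝ) - p := by
            rw [Nat.cast_sub hpi]
          rw [hρ_def, ← Real.exp_nat_mul, Real.exp_le_exp, hcast]
          have h3 : c * ((i : ℝ) - p) ≤ y := by
            rw [hy_def]
            apply mul_le_mul_of_nonneg_left _ hc.le
            linarith
          have h4 : y ≤ y ^ 2 := by nlinarith
          have h6 := mul_le_mul_of_nonneg_left (h3.trans h4) hnR.le
          nlinarith [h6]
        have hAi : A i = T * ρ ^ (i - p) := by rw [hA_def]; exact if_pos hpi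
        have hfin : T * Real.exp ((n : ℝ) * y - (n : ℝ) / 2 * (Real.exp (2 * y) - 1)) ≤ A i := by
          rw [hAi]
          exact mul_le_mul_of_nonneg_left (le_trans h1 h2) hT.le
        linarith [hB0 i, hC0 i]
  -- sum of A
  have hgeo : ∀ {r : ℝ}, 0 ≤ r → r ≤ 1/2 → ∀ k : ℕ, ∑ j ∈ range k, r ^ j ≤ 2 := by
    intro r h0 h1 k
    have := geom_aux h0 (by linarith) k
    have h2 : 1/(1-r) ≤ 2 := by
      rw [div_le_iff₀ (by linarith)]; linarith
    linarith
  have hsumA : ∑ i ∈ range R, A i ≤ 2 * T := by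
    have h1 : ∑ i ∈ range R, A i
        = ∑ i ∈ (range R).filter (fun i => p ≤ i), T * ρ ^ (i - p) := by
      rw [Finset.sum_filter]
    have h2 : (range R).filter (fun i => p ≤ i) ⊆ Finset.Ico p (max R p) := by
      intro i hi
      rw [Finset.mem_filter, Finset.mem_range] at hi
      rw [Finset.mem_Ico]
      exact ⟨hi.2, lt_of_lt_of_le hi.1 (le_max_left _ _)⟩
    have h3 : ∑ i ∈ (range R).filter (fun i => p ≤ i), T * ρ ^ (i - p)
        ≤ ∑ i ∈ Finset.Ico p (max R p), T * ρ ^ (i - p) :=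
      Finset.sum_le_sum_of_subset_of_nonneg h2 (fun i _ _ => by positivity)
    have h4 : ∑ i ∈ Finset.Ico p (max R p), T * ρ ^ (i - p)
        = ∑ k ∈ range (max R p - p), T * ρ ^ k := by
      rw [Finset.sum_Ico_eq_sum_range]
      apply Finset.sum_congr rfl
      intro k _
      have hk : p + k - p = k := by omega
      rw [hk]
    have h5 : ∑ k ∈ range (max R p - p), T * ρ ^ k ≤ T * 2 := by
      rw [← Finset.mul_sum]
      exact mul_le_mul_of_nonneg_left (hgeo hρ0 hρhalf _) hT.le
    rw [h1]
    calc _ ≤ _ := h3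
      _ = _ := h4
      _ ≤ T * 2 := h5
      _ = 2 * T := by ring
  have hsumB : ∑ i ∈ range R, B i ≤ 2 * T := by
    set Bh : ℕ → ℝ := fun i => if i ≤ p' then T * ρ' ^ (p' - i) else 0 with hBh_def
    have hBh0 : ∀ i, 0 ≤ Bh i := by
      intro i; rw [hBh_def]; dsimp only; split <;> positivity
    have h1 : ∀ i, B i ≤ Bh i := by
      intro i
      rw [hB_def, hBh_def]
      dsimp only
      split
      · rename_i h
        rw [if_pos (Nat.le_floor (by exact_mod_cast h))]
      · exact hBh0 i
    have h2 : ∑ i ∈ range R, B i ≤ ∑ i ∈ range R, Bh i := Finset.sum_le_sum (fun i _ => h1 i)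
    have h3 : ∑ i ∈ range R, Bh i ≤ ∑ i ∈ range (max R (p' + 1)), Bh i :=
      Finset.sum_le_sum_of_subset_of_nonneg
        (Finset.range_subset_range.2 (le_max_left _ _)) (fun i _ _ => hBh0 i)
    have h4 : ∑ i ∈ range (p' + 1), Bh i = ∑ i ∈ range (max R (p' + 1)), Bh i := by
      apply Finset.sum_subset (Finset.range_subset_range.2 (le_max_right _ _))
      intro i _ hi
      rw [Finset.mem_range] at hi
      rw [hBh_def]
      dsimp only
      rw [if_neg (by omega)]
    have h5 : ∑ i ∈ range (p' + 1), Bh i = ∑ i ∈ range (p' + 1), T * ρ' ^ (p' - i) := by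
      apply Finset.sum_congr rfl
      intro i hi
      rw [Finset.mem_range] at hi
      rw [hBh_def]
      dsimp only
      rw [if_pos (by omega)]
    have h6 : ∑ i ∈ range (p' + 1), T * ρ' ^ (p' - i)
        = ∑ j ∈ range (p' + 1), T * ρ' ^ j := by
      have hrefl := Finset.sum_range_reflect (fun j => T * ρ' ^ j) (p' + 1)
      rw [← hrefl]
      apply Finset.sum_congr rfl
      intro j hj
      rw [Finset.mem_range] at hj
      have hk : p' + 1 - 1 - j = p' - j := by omega
      rw [hk]
    have h7 : ∑ j ∈ range (p' + 1), T * ρ' ^ j ≤ T * 2 := by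
      rw [← Finset.mul_sum]
      exact mul_le_mul_of_nonneg_left (hgeo hρ'0 hρ'half _) hT.le
    calc ∑ i ∈ range R, B i ≤ ∑ i ∈ range (max R (p' + 1)), Bh i := le_trans h2 h3
      _ = ∑ i ∈ range (p' + 1), Bh i := h4.symm
      _ = ∑ j ∈ range (p' + 1), T * ρ' ^ j := by rw [h5, h6]
      _ ≤ T * 2 := h7
      _ = 2 * T := by ring
  have hsumC : ∑ i ∈ range R, C i ≤ T * (2 / c + 1) := by
    set a : ℕ := ⌈x - 1 / c⌉₊ with ha_def
    have h1 : ∑ i ∈ range R, C i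
        = ∑ i ∈ (range R).filter (fun i : ℕ => x - 1 / c < (i : ℝ) ∧ (i : ℝ) < x + 1 / c), T := by
      rw [Finset.sum_filter]
    have h2 : (range R).filter (fun i : ℕ => x - 1 / c < (i : ℝ) ∧ (i : ℝ) < x + 1 / c)
        ⊆ Finset.Ico a p := by
      intro i hi
      rw [Finset.mem_filter] at hi
      rw [Finset.mem_Ico]
      constructor
      · exact Nat.ceil_le.2 hi.2.1.le
      · have hip : (i : ℝ) < (p : ℝ) := lt_of_lt_of_le hi.2.2 (Nat.le_ceil _)
        exact_mod_cast hip
    have h3 : ((Finset.Ico a p).card : ℝ) ≤ 2 / c + 1 := by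
      rw [Nat.card_Ico]
      rcases le_or_gt p a with h | h
      · rw [Nat.sub_eq_zero_of_le h]
        have : (0:ℝ) < 2 / c + 1 := by positivity
        simpa using this.le
      · have hcast : ((p - a : ℕ) : ℝ) = (p : ℝ) - a := by
          rw [Nat.cast_sub h.le]
        rw [hcast]
        have hp1 : 0 < p := lt_of_le_of_lt (Nat.zero_le a) h
        have hx1 : 0 < x + 1 / c := Nat.ceil_pos.1 hp1
        have h4 : (p : ℝ) < x + 1 / c + 1 := Nat.ceil_lt_add_one hx1.le
        have h5 : x - 1 / c ≤ (a : ℝ) := Nat.le_ceil _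
        have hdiv : 2 / c = 1 / c + 1 / c := by ring
        linarith
    rw [h1]
    calc ∑ i ∈ (range R).filter (fun i : ℕ => x - 1 / c < (i : ℝ) ∧ (i : ℝ) < x + 1 / c), T
        ≤ ∑ _i ∈ Finset.Ico a p, T := by
          apply Finset.sum_le_sum_of_subset_of_nonneg h2 (fun i _ _ => hT.le)
      _ = ((Finset.Ico a p).card : ℝ) * T := by rw [Finset.sum_const, nsmul_eq_mul]
      _ ≤ (2 / c + 1) * T := mul_le_mul_of_nonneg_right h3 hT.le
      _ = T * (2 / c + 1) := by ring
  -- assemble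
  have step1 : ∑ i ∈ range R, (Real.exp c) ^ ((i + 1) * n) *
      Real.exp (-(t * (Real.exp c) ^ (2 * i)))
      ≤ ∑ i ∈ range R, Real.exp (c * n) * (A i + B i + C i) := by
    apply Finset.sum_le_sum
    intro i _
    rw [hterm i]
    exact mul_le_mul_of_nonneg_left (hpoint i) (Real.exp_pos _).le
  have step2 : ∑ i ∈ range R, Real.exp (c * n) * (A i + B i + C i)
      = Real.exp (c * n) * ((∑ i ∈ range R, A i) + (∑ i ∈ range R, B i)
        + (∑ i ∈ range R, C i)) := by
    rw [← Finset.mul_sum, Finset.sum_add_distrib, Finset.sum_add_distrib]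
  -- right-hand side identities
  have h2pow : (2 : ℝ) ^ (ε * (n : ℝ) / 2) = Real.exp (2 * c * n) := by
    rw [Real.rpow_def_of_pos (by norm_num : (0:ℝ) < 2)]
    congr 1
    rw [hc_def]
    ring
  have hP : ((n : ℝ) / (2 * Real.exp 1 * t)) ^ ((n : ℝ) / 2) = T := by
    have hPpos : (0:ℝ) < (n : ℝ) / (2 * Real.exp 1 * t) := by positivity
    have hsplit : (n : ℝ) / (2 * Real.exp 1 * t) = ((n : ℝ) / (2 * t)) * (Real.exp 1)⁻¹ := by
      rw [show (2 * Real.exp 1 * t) = (2 * t) * (Real.exp 1) by ring, ← div_div,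
        div_eq_mul_inv]
    have hlog : Real.log ((n : ℝ) / (2 * Real.exp 1 * t)) = 2 * c * x - 1 := by
      rw [hsplit, Real.log_mul (by positivity) (by positivity), Real.log_inv, Real.log_exp]
      have h9 : Real.log ((n : ℝ) / (2 * t)) = 2 * c * x := by
        rw [hx_def]; field_simp
      rw [h9]
      ring
    rw [Real.rpow_def_of_pos hPpos, hT_def, hlog, Real.exp_eq_exp]
    ring
  have hsq2 : Real.exp (2 * c * n) = Real.exp (c * n) * Real.exp (c * n) := by
    rw [← Real.exp_add]; ring_nf
  have hfinal : Real.exp (c * n) * ((2 * T) + (2 * T) + (T * (2 / c + 1)))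
      ≤ 1 / 2 * Real.exp (2 * c * n) * T := by
    have hE : 10 + 4 / c ≤ Real.exp (c * n) := le_trans hM10 hlarge
    have hEpos : (0:ℝ) < Real.exp (c * n) := Real.exp_pos _
    have h6 : (2 * T) + (2 * T) + (T * (2 / c + 1)) = T * (5 + 2 / c) := by ring
    have hsplit2 : (10:ℝ) + 4 / c = 2 * (5 + 2 / c) := by ring
    have h7 : T * (5 + 2 / c) ≤ T * (Real.exp (c * n) / 2) :=
      mul_le_mul_of_nonneg_left (by linarith) hT.le
    calc Real.exp (c * n) * ((2 * T) + (2 * T) + (T * (2 / c + 1)))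
        = Real.exp (c * n) * (T * (5 + 2 / c)) := by rw [h6]
      _ ≤ Real.exp (c * n) * (T * (Real.exp (c * n) / 2)) :=
          mul_le_mul_of_nonneg_left h7 hEpos.le
      _ = 1 / 2 * (Real.exp (c * n) * Real.exp (c * n)) * T := by ring
      _ = 1 / 2 * Real.exp (2 * c * n) * T := by rw [hsq2]
  have hsum3 : (∑ i ∈ range R, A i) + (∑ i ∈ range R, B i) + (∑ i ∈ range R, C i)
      ≤ (2 * T) + (2 * T) + (T * (2 / c + 1)) :=
    add_le_add (add_le_add hsumA hsumB) hsumC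
  calc ∑ i ∈ range R, (Real.exp c) ^ ((i + 1) * n) *
        Real.exp (-(t * (Real.exp c) ^ (2 * i)))
      ≤ Real.exp (c * n) * ((∑ i ∈ range R, A i) + (∑ i ∈ range R, B i)
        + (∑ i ∈ range R, C i)) := by rw [← step2]; exact step1
    _ ≤ Real.exp (c * n) * ((2 * T) + (2 * T) + (T * (2 / c + 1))) :=
        mul_le_mul_of_nonneg_left hsum3 (Real.exp_pos _).le
    _ ≤ 1 / 2 * Real.exp (2 * c * n) * T := hfinal
    _ = 1 / 2 * (2 : ℝ) ^ (ε * (n : ℝ) / 2) *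
          ((n : ℝ) / (2 * Real.exp 1 * t)) ^ ((n : ℝ) / 2) := by rw [h2pow, hP]

lemma zero_mem_lattice {n : ℕ} {L : Set (Euc n)} (hL : IsLattice L) : (0 : Euc n) ∈ L := by
  obtain ⟨b, rfl⟩ := hL
  exact ⟨0, by simp⟩

lemma lattice_ball_finite {n : ℕ} {L : Set (Euc n)} (hL : IsLattice L) (R : ℝ) :
    {y ∈ L | ‖y‖ ≤ R}.Finite := by
  obtain ⟨b, rfl⟩ := hL
  set K : Fin n → ℝ := fun i => ‖(LinearMap.toContinuousLinearMap (b.coord i) : Euc n →L[ℝ] ℝ)‖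
  set M : Fin n → ℤ := fun i => ⌈K i * R⌉
  have hsub : {y ∈ {x | ∃ z : Fin n → ℤ, x = ∑ i, (z i : ℝ) • b i} | ‖y‖ ≤ R}
      ⊆ (fun z : Fin n → ℤ => ∑ i, (z i : ℝ) • b i) ''
        (Set.univ.pi fun i => Set.Icc (-(M i)) (M i)) := by
    rintro y ⟨⟨z, rfl⟩, hnorm⟩
    refine ⟨z, ?_, rfl⟩
    intro i _
    have hz : b.coord i (∑ j, (z j : ℝ) • b j) = (z i : ℝ) := by
      rw [Module.Basis.coord_apply, Module.Basis.repr_sum_self]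
    have hb : |(z i : ℝ)| ≤ K i * R := by
      rw [← hz]
      calc |b.coord i (∑ j, (z j : ℝ) • b j)|
          = ‖(LinearMap.toContinuousLinearMap (b.coord i) : Euc n →L[ℝ] ℝ)
              (∑ j, (z j : ℝ) • b j)‖ := by
            rw [Real.norm_eq_abs]; rfl
        _ ≤ K i * ‖∑ j, (z j : ℝ) • b j‖ := ContinuousLinearMap.le_opNorm _ _
        _ ≤ K i * R := by
            apply mul_le_mul_of_nonneg_left hnorm (norm_nonneg _)
    have habs : |z i| ≤ M i := by
      have h1 : (|z i| : ℝ) ≤ (M i : ℝ) := by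
        calc (|z i| : ℝ) = |(z i : ℝ)| := by push_cast; rfl
          _ ≤ K i * R := hb
          _ ≤ (M i : ℝ) := Int.le_ceil _
      exact_mod_cast h1
    rw [Set.mem_Icc]
    exact abs_le.1 habs
  exact Set.Finite.subset (Set.Finite.image _ (Set.Finite.pi fun i => Set.finite_Icc _ _)) hsub

lemma lambda1_spec {n : ℕ} {L : Set (Euc n)} (hL : IsLattice L) (hn : 0 < n) :
    0 < lambda1 L ∧ ∀ y ∈ L, y ≠ 0 → lambda1 L ≤ ‖y‖ := by
  classical
  have hfin : {y ∈ L | ‖y‖ ≤ 1}.Finite := lattice_ball_finite hL 1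
  set F : Finset (Euc n) := (hfin.toFinset).filter (fun y => y ≠ 0) with hF_def
  set G : Finset ℝ := insert (1 : ℝ) (F.image (fun y => ‖y‖)) with hG_def
  have hGne : G.Nonempty := ⟨1, Finset.mem_insert_self _ _⟩
  set cc : ℝ := G.min' hGne with hcc_def
  have hcc_pos : 0 < cc := by
    apply (Finset.lt_min'_iff G hGne).2
    intro b hb
    rw [hG_def, Finset.mem_insert] at hb
    rcases hb with rfl | hb
    · norm_num
    · obtain ⟨y, hy, rfl⟩ := Finset.mem_image.1 hb
      rw [hF_def, Finset.mem_filter] at hy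
      exact norm_pos_iff.2 hy.2
  have hcc_le_one : cc ≤ 1 := Finset.min'_le _ _ (Finset.mem_insert_self _ _)
  have hlow : ∀ y ∈ L, y ≠ 0 → cc ≤ ‖y‖ := by
    intro y hy hy0
    rcases le_or_gt ‖y‖ 1 with h1 | h1
    · apply Finset.min'_le
      rw [hG_def, Finset.mem_insert]
      right
      apply Finset.mem_image.2
      refine ⟨y, ?_, rfl⟩
      rw [hF_def, Finset.mem_filter, Set.Finite.mem_toFinset]
      exact ⟨⟨hy, h1⟩, hy0⟩
    · linarith
  have hbdd : BddBelow {r : ℝ | ∃ y ∈ L, y ≠ 0 ∧ ‖y‖ = r} := by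
    refine ⟨cc, ?_⟩
    rintro r ⟨y, hy, hy0, rfl⟩
    exact hlow y hy hy0
  have hne : {r : ℝ | ∃ y ∈ L, y ≠ 0 ∧ ‖y‖ = r}.Nonempty := by
    obtain ⟨b, hb⟩ := hL
    have hmem : b ⟨0, hn⟩ ∈ L := by
      rw [hb]
      refine ⟨fun i => if i = ⟨0, hn⟩ then 1 else 0, ?_⟩
      rw [Finset.sum_eq_single (⟨0, hn⟩ : Fin n)]
      · simp
      · intro j _ hj; simp [hj]
      · intro h; exact absurd (Finset.mem_univ _) h
    exact ⟨‖b ⟨0, hn⟩‖, b ⟨0, hn⟩, hmem, b.ne_zero _, rfl⟩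
  constructor
  · apply lt_of_lt_of_le hcc_pos
    apply le_csInf hne
    rintro r ⟨y, hy, hy0, rfl⟩
    exact hlow y hy hy0
  · intro y hy hy0
    exact csInf_le hbdd ⟨y, hy, hy0, rfl⟩

set_option maxHeartbeats 2000000 in
theorem gaussMass_lt_asymptotic :
    ∀ ε > (0 : ℝ), ∃ N : ℕ, ∀ n ≥ N, ∀ L : Set (Euc n), IsLattice L →
      ∀ β : ℝ, 0 ≤ β →
      (∀ α : ℝ, 1 ≤ α → (latticePointCount α L : ℝ) ≤ (2 : ℝ) ^ (β * n) * α ^ n) →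
      ∀ s : ℝ, 0 < s →
        gaussMass s L 0 <
          1 + ((2 : ℝ) ^ (2 * β + ε) * s ^ 2 * n /
              (2 * Real.pi * Real.exp 1 * lambda1 L ^ 2)) ^ ((n : ℝ) / 2) := by
  intro ε hε
  obtain ⟨N, hN1, hlemA⟩ := lemA ε hε
  refine ⟨N, ?_⟩
  intro n hn L hL β hβ hcount s hs
  classical
  have hn1 : 1 ≤ n := le_trans hN1 hn
  have hn0 : 0 < n := hn1
  have hnR : (0:ℝ) < n := by exact_mod_cast hn0
  obtain ⟨hlpos, hlmin⟩ := lambda1_spec hL hn0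
  set lam : ℝ := lambda1 L with hlam_def
  set c : ℝ := ε * Real.log 2 / 4 with hc_def
  have hc : 0 < c := by
    have h2 : 0 < Real.log 2 := Real.log_pos (by norm_num)
    rw [hc_def]; positivity
  set q : ℝ := Real.exp c with hq_def
  have hq1 : 1 < q := by
    have := Real.add_one_le_exp c
    rw [hq_def]; linarith
  have hq0 : 0 < q := lt_trans zero_lt_one hq1
  set t : ℝ := Real.pi * lam ^ 2 / s ^ 2 with ht_def
  have ht : 0 < t := by
    rw [ht_def]
    exact div_pos (mul_pos Real.pi_pos (pow_pos hlpos 2)) (pow_pos hs 2)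
  set T : ℝ := ((n:ℝ) / (2 * Real.exp 1 * t)) ^ ((n:ℝ)/2) with hT_def
  have hTpos : 0 < T := Real.rpow_pos_of_pos (by positivity) _
  set D : ℝ := (2:ℝ) ^ (β * (n:ℝ)) * (1/2 * (2:ℝ) ^ (ε * (n:ℝ) / 2) * T) with hD_def
  have hD_pos : 0 < D := by
    rw [hD_def]
    have h1 : (0:ℝ) < (2:ℝ) ^ (β * (n:ℝ)) := Real.rpow_pos_of_pos (by norm_num) _
    have h2 : (0:ℝ) < (2:ℝ) ^ (ε * (n:ℝ) / 2) := Real.rpow_pos_of_pos (by norm_num) _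
    positivity
  -- RHS identity
  have hRHS : ((2 : ℝ) ^ (2 * β + ε) * s ^ 2 * n /
      (2 * Real.pi * Real.exp 1 * lam ^ 2)) ^ ((n : ℝ) / 2) = 2 * D := by
    have hbase : (2 : ℝ) ^ (2 * β + ε) * s ^ 2 * n /
        (2 * Real.pi * Real.exp 1 * lam ^ 2)
        = (2 : ℝ) ^ (2 * β + ε) * ((n:ℝ) / (2 * Real.exp 1 * t)) := by
      rw [ht_def]
      field_simp
    have h2 : ((2:ℝ) ^ (2 * β + ε)) ^ ((n:ℝ)/2)
        = (2:ℝ) ^ (β * (n:ℝ)) * (2:ℝ) ^ (ε * (n:ℝ)/2) := by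
      rw [← Real.rpow_mul (by norm_num : (0:ℝ) ≤ 2),
        show (2*β+ε) * ((n:ℝ)/2) = β*(n:ℝ) + ε*(n:ℝ)/2 by ring,
        Real.rpow_add (by norm_num : (0:ℝ) < 2)]
    rw [hbase, Real.mul_rpow (Real.rpow_nonneg (by norm_num) _) (by positivity), h2,
      ← hT_def, hD_def]
    ring
  -- core finite bound
  have hcore : ∀ F : Finset L, (∀ y ∈ F, (y : Euc n) ≠ 0) →
      ∑ y ∈ F, Real.exp (-(Real.pi * ‖(y : Euc n)‖ ^ 2 / s ^ 2)) ≤ D := by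
    intro F hF
    set k : L → ℕ := fun y => ⌊Real.logb q (‖(y : Euc n)‖ / lam)⌋₊ with hk_def
    set R : ℕ := F.sup k + 1 with hR_def
    have hmaps : ∀ y ∈ F, k y ∈ Finset.range R := fun y hy =>
      Finset.mem_range.2 (Nat.lt_succ_of_le (Finset.le_sup hy))
    rw [← Finset.sum_fiberwise_of_maps_to hmaps]
    have hstep : ∀ i ∈ Finset.range R,
        ∑ y ∈ F.filter (fun y => k y = i),
          Real.exp (-(Real.pi * ‖(y : Euc n)‖ ^ 2 / s ^ 2))
        ≤ (2:ℝ) ^ (β * (n:ℝ)) * (q ^ ((i + 1) * n) * Real.exp (-(t * q ^ (2 * i)))) := by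
      intro i _
      have hyb : ∀ y ∈ F.filter (fun y => k y = i),
          Real.exp (-(Real.pi * ‖(y : Euc n)‖ ^ 2 / s ^ 2))
            ≤ Real.exp (-(t * q ^ (2 * i))) := by
        intro y hy
        rw [Finset.mem_filter] at hy
        have hy0 : (y : Euc n) ≠ 0 := hF y hy.1
        have hnormpos : 0 < ‖(y : Euc n)‖ := norm_pos_iff.2 hy0
        have hr1 : 1 ≤ ‖(y : Euc n)‖ / lam := (one_le_div hlpos).2 (hlmin _ y.2 hy0)
        have hrpos : 0 < ‖(y : Euc n)‖ / lam := lt_of_lt_of_le zero_lt_one hr1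
        have hqi : q ^ i ≤ ‖(y : Euc n)‖ / lam := by
          rw [← hy.2]
          have hlogb0 : 0 ≤ Real.logb q (‖(y : Euc n)‖ / lam) := Real.logb_nonneg hq1 hr1
          calc q ^ (k y) = q ^ ((k y : ℕ) : ℝ) := (Real.rpow_natCast q _).symm
            _ ≤ q ^ Real.logb q (‖(y : Euc n)‖ / lam) :=
                (Real.rpow_le_rpow_left_iff hq1).2 (Nat.floor_le hlogb0)
            _ = ‖(y : Euc n)‖ / lam := Real.rpow_logb hq0 (ne_of_gt hq1) hrpos
        apply Real.exp_le_exp.2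
        rw [neg_le_neg_iff]
        have h1 : t * q ^ (2 * i) ≤ t * (‖(y : Euc n)‖ / lam) ^ 2 := by
          apply mul_le_mul_of_nonneg_left _ ht.le
          rw [pow_mul']
          apply pow_le_pow_left₀ (by positivity) hqi
        have h2 : t * (‖(y : Euc n)‖ / lam) ^ 2 = Real.pi * ‖(y : Euc n)‖ ^ 2 / s ^ 2 := by
          rw [ht_def]
          field_simp
        linarith
      have hq1n : (1:ℝ) ≤ q ^ (i + 1) := one_le_pow₀ hq1.le
      have hsubset : (((F.filter (fun y => k y = i)).image
            (Subtype.val : L → Euc n) : Finset (Euc n)) : Set (Euc n))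
          ⊆ {v ∈ L | v ≠ 0 ∧ ‖v‖ ≤ q ^ (i + 1) * lambda1 L} := by
        intro v hv
        rw [Finset.coe_image, Set.mem_image] at hv
        obtain ⟨y, hy, rfl⟩ := hv
        rw [Finset.mem_coe, Finset.mem_filter] at hy
        have hy0 : (y : Euc n) ≠ 0 := hF y hy.1
        refine ⟨y.2, hy0, ?_⟩
        have hr1 : 1 ≤ ‖(y : Euc n)‖ / lam := (one_le_div hlpos).2 (hlmin _ y.2 hy0)
        have hrpos : 0 < ‖(y : Euc n)‖ / lam := lt_of_lt_of_le zero_lt_one hr1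
        have hup : ‖(y : Euc n)‖ / lam < q ^ (i + 1) := by
          have hfl : Real.logb q (‖(y : Euc n)‖ / lam) < (k y : ℝ) + 1 := by
            rw [hk_def]
            exact Nat.lt_floor_add_one _
          calc ‖(y : Euc n)‖ / lam
              = q ^ Real.logb q (‖(y : Euc n)‖ / lam) :=
                (Real.rpow_logb hq0 (ne_of_gt hq1) hrpos).symm
            _ < q ^ (((k y : ℝ)) + 1) :=
                (Real.rpow_lt_rpow_left_iff hq1).2 hfl
            _ = q ^ (((i + 1 : ℕ) : ℝ)) := by rw [hy.2]; push_cast; ring_nf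
            _ = q ^ (i + 1) := Real.rpow_natCast q _
        calc ‖(y : Euc n)‖ = (‖(y : Euc n)‖ / lam) * lam := by field_simp
          _ ≤ q ^ (i + 1) * lam := by
              apply mul_le_mul_of_nonneg_right hup.le hlpos.le
          _ = q ^ (i + 1) * lambda1 L := by rw [hlam_def]
      have hBfin : {v ∈ L | v ≠ 0 ∧ ‖v‖ ≤ q ^ (i + 1) * lambda1 L}.Finite := by
        apply (lattice_ball_finite hL (q ^ (i + 1) * lambda1 L)).subset
        intro v hv
        exact ⟨hv.1, hv.2.2⟩
      have hcard : ((F.filter (fun y => k y = i)).card : ℝ)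
          ≤ (2:ℝ) ^ (β * (n:ℝ)) * q ^ ((i + 1) * n) := by
        have hc1 : (F.filter (fun y => k y = i)).card
            = ((F.filter (fun y => k y = i)).image (Subtype.val : L → Euc n)).card :=
          (Finset.card_image_of_injective _ Subtype.val_injective).symm
        have hc2 : ((F.filter (fun y => k y = i)).image (Subtype.val : L → Euc n)).card
            ≤ latticePointCount (q ^ (i + 1)) L := by
          rw [← Set.ncard_coe_finset]
          exact Set.ncard_le_ncard hsubset hBfin
        have hc3 := hcount (q ^ (i + 1)) hq1n
        have hc4 : ((q ^ (i + 1) : ℝ)) ^ n = q ^ ((i + 1) * n) := (pow_mul q (i+1) n).symm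
        calc ((F.filter (fun y => k y = i)).card : ℝ)
            ≤ (latticePointCount (q ^ (i + 1)) L : ℝ) := by
              rw [hc1]; exact_mod_cast hc2
          _ ≤ (2:ℝ) ^ (β * (n:ℝ)) * ((q ^ (i + 1) : ℝ)) ^ n := hc3
          _ = (2:ℝ) ^ (β * (n:ℝ)) * q ^ ((i + 1) * n) := by rw [hc4]
      calc ∑ y ∈ F.filter (fun y => k y = i),
            Real.exp (-(Real.pi * ‖(y : Euc n)‖ ^ 2 / s ^ 2))
          ≤ (F.filter (fun y => k y = i)).card • Real.exp (-(t * q ^ (2 * i))) :=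
            Finset.sum_le_card_nsmul _ _ _ hyb
        _ = ((F.filter (fun y => k y = i)).card : ℝ) * Real.exp (-(t * q ^ (2 * i))) :=
            nsmul_eq_mul _ _
        _ ≤ ((2:ℝ) ^ (β * (n:ℝ)) * q ^ ((i + 1) * n)) * Real.exp (-(t * q ^ (2 * i))) :=
            mul_le_mul_of_nonneg_right hcard (Real.exp_pos _).le
        _ = (2:ℝ) ^ (β * (n:ℝ)) * (q ^ ((i + 1) * n) * Real.exp (-(t * q ^ (2 * i)))) := by
            ring
    have hA := hlemA n hn t ht R
    rw [← hT_def] at hA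
    calc ∑ i ∈ Finset.range R, ∑ y ∈ F.filter (fun y => k y = i),
          Real.exp (-(Real.pi * ‖(y : Euc n)‖ ^ 2 / s ^ 2))
        ≤ ∑ i ∈ Finset.range R,
            (2:ℝ) ^ (β * (n:ℝ)) * (q ^ ((i + 1) * n) * Real.exp (-(t * q ^ (2 * i)))) :=
          Finset.sum_le_sum hstep
      _ = (2:ℝ) ^ (β * (n:ℝ)) * ∑ i ∈ Finset.range R,
            (q ^ ((i + 1) * n) * Real.exp (-(t * q ^ (2 * i)))) := by
          rw [Finset.mul_sum]
      _ ≤ (2:ℝ) ^ (β * (n:ℝ)) * (1/2 * (2:ℝ) ^ (ε * (n:ℝ) / 2) * T) := by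
          apply mul_le_mul_of_nonneg_left hA (Real.rpow_nonneg (by norm_num) _)
      _ = D := by rw [hD_def]
  -- tsum manipulation
  have h0L : (0 : Euc n) ∈ L := zero_mem_lattice hL
  set f : L → ℝ := fun y => Real.exp (-(Real.pi * ‖(y : Euc n) - 0‖ ^ 2 / s ^ 2)) with hf_def
  have hgm : gaussMass s L 0 = ∑' y : L, f y := rfl
  rw [hgm, hRHS]
  by_cases hsum : Summable f
  · set z₀ : L := ⟨0, h0L⟩ with hz₀_def
    have hsplit := hsum.tsum_eq_add_tsum_ite z₀
    have hfz : f z₀ = 1 := by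
      rw [hf_def, hz₀_def]
      simp
    set g : L → ℝ := fun y => if y = z₀ then 0 else f y with hg_def
    have hg0 : ∀ y, 0 ≤ g y := by
      intro y
      rw [hg_def]
      dsimp only
      split
      · exact le_rfl
      · exact (Real.exp_pos _).le
    have hgle : ∀ y, g y ≤ f y := by
      intro y
      rw [hg_def]
      dsimp only
      split
      · exact (Real.exp_pos _).le
      · exact le_rfl
    have hgsum : Summable g := Summable.of_nonneg_of_le hg0 hgle hsum
    have hgbound : ∑' y, g y ≤ D := by
      apply hgsum.tsum_le_of_sum_le
      intro F
      have he1 : ∑ y ∈ F, g y = ∑ y ∈ F.erase z₀, g y :=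
        (Finset.sum_erase F (by rw [hg_def]; simp)).symm
      have he2 : ∑ y ∈ F.erase z₀, g y = ∑ y ∈ F.erase z₀,
          Real.exp (-(Real.pi * ‖(y : Euc n)‖ ^ 2 / s ^ 2)) := by
        apply Finset.sum_congr rfl
        intro y hy
        have hy0 : y ≠ z₀ := Finset.ne_of_mem_erase hy
        rw [hg_def]
        dsimp only
        rw [if_neg hy0, hf_def]
        simp [sub_zero]
      rw [he1, he2]
      apply hcore
      intro y hy
      have hy0 : y ≠ z₀ := Finset.ne_of_mem_erase hy
      intro hv
      apply hy0
      rw [hz₀_def]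
      exact Subtype.ext hv
    rw [hsplit, hfz]
    have : ∑' (y : L), (if y = z₀ then 0 else f y) = ∑' y, g y := by rw [hg_def]
    rw [this]
    linarith [hD_pos, hgbound]
  · rw [tsum_eq_zero_of_not_summable hsum]
    linarith [hD_pos]
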